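/- Let 𝕂 be an integral domain containing 𝔽_r, and suppose to each a ∈ A₊ with deg a = d is assigned a unit [a] ∈ 𝕂^× such that [a+b] = [a] + [b] and [εa] = ε[a] for ε ∈ 𝔽_r (for a, b ranging over polynomials of degree < d₀). Then for positive integers r₁, s₁ and 0 ≤ d < d₀, Σ_{a ∈ A₊,d} [a]^{−r₁} · Σ_{b ∈ A₊,d} [b]^{−s₁} = Σ_{a ∈ A₊,d} [a]^{−(r₁+s₁)} + Σ_{i+j = r₁+s₁} Δ^{i,j}_{r₁,s₁} Σ_{a ∈ A₊,d, f ∈ A₊,<d} [a]^{−i}[f]^{−j}, where Δ^{i,j}_{r₁,s₁} = (−1)^{r₁−1} C(j−1, r₁−1) + (−1)^{s₁−1} C(j−1, s₁−1) if (r−1) | j and j > 0, and 0 otherwise (binomials mod p). -/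

import Mathlib

/-!
Write `x = [a]`, `y = [b]` for distinct `a, b ∈ A₊,d`. Every such `b` is `a - ε f` for exactly
one `ε ∈ 𝔽_r^×` and one monic `f` of degree `< d`, so `x - y = ε [f]` is a unit. The product of
the two power sums splits into its diagonal `Σ_a [a]^{-(r₁+s₁)}` and the off-diagonal terms
`x^{-r₁} y^{-s₁}`, which are expanded in partial fractions. After swapping `a` and `b` in the
`y`-part, only the sums `Σ_{a ≠ b} (x - y)^{-j} x^{-i} = (Σ_ε ε^{-j}) Σ_{a, f} [a]^{-i} [f]^{-j}`
remain, and `Σ_ε ε^{-j}` is `-1` or `0` according as `r - 1` divides `j` or not. The extra term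
`j = r₁ + s₁` of the statement vanishes: `A₊,<0` is empty, and `#A₊,d = r^d` is `0` in `𝕂` for
`d > 0`.
-/

open Finset Polynomial
open scoped Ring

/-- `C(j - 1, s - 1)` for `j, s ≥ 1`, extended by `[j = s]` when `j = 0` or `s = 0` (the number of
compositions of `j` into `s` parts). The extension keeps Pascal's rule, so the partial fraction
expansion below holds for all `r + s > 0` and follows by a plain induction. -/
def predChoose : ℕ → ℕ → ℕ
  | 0, 0 => 1
  | j + 1, s + 1 => j.choose s
  | _, _ => 0

@[simp] theorem predChoose_zero_zero : predChoose 0 0 = 1 := rfl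

@[simp] theorem predChoose_zero_succ (s : ℕ) : predChoose 0 (s + 1) = 0 := rfl

@[simp] theorem predChoose_succ_zero (j : ℕ) : predChoose (j + 1) 0 = 0 := rfl

@[simp] theorem predChoose_succ_succ (j s : ℕ) : predChoose (j + 1) (s + 1) = j.choose s := rfl

theorem predChoose_eq_zero_of_lt : ∀ {j s : ℕ}, j < s → predChoose j s = 0
  | 0, _ + 1, _ => rfl
  | _ + 1, _ + 1, h => Nat.choose_eq_zero_of_lt (by omega)

theorem predChoose_succ_succ_eq_add (j s : ℕ) :
    predChoose (j + 1) (s + 1) = predChoose j s + predChoose j (s + 1) := by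
  rcases j with _ | j <;> rcases s with _ | s
  · rfl
  · simp
  · simp
  · exact Nat.choose_succ_succ j s

section PartialFraction

variable {R : Type*} [CommRing R]

/-- With `u = x⁻¹` and `z = (x - y)⁻¹`, this is the part of the partial fraction expansion of
`x^{-r} y^{-s}` made of the powers of `x⁻¹`. -/
def pfPart (u z : R) (r s : ℕ) : R :=
  ∑ j ∈ range (r + s), (-1) ^ s * (predChoose j s : R) * z ^ j * u ^ (r + s - j)

theorem pfPart_zero_left (u z : R) (s : ℕ) : pfPart u z 0 s = 0 :=
  sum_eq_zero fun j hj => by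
    rw [predChoose_eq_zero_of_lt (by simpa using hj)]
    simp

theorem pfPart_zero_right (u z : R) {r : ℕ} (hr : 0 < r) : pfPart u z r 0 = u ^ r := by
  obtain ⟨r, rfl⟩ := Nat.exists_eq_add_one_of_ne_zero hr.ne'
  simp [pfPart, sum_range_succ']

theorem pfPart_succ_succ (u z : R) (r s : ℕ) :
    pfPart u z (r + 1) (s + 1) = z * pfPart u z r (s + 1) - z * pfPart u z (r + 1) s := by
  have hn : r + 1 + (s + 1) = r + s + 1 + 1 := by ring
  have hn₁ : r + (s + 1) = r + s + 1 := by ring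
  have hn₂ : r + 1 + s = r + s + 1 := by ring
  rw [pfPart, hn, sum_range_succ', pfPart, pfPart, hn₁, hn₂, mul_sum, mul_sum,
    ← sum_sub_distrib]
  simp only [predChoose_zero_succ, Nat.cast_zero, mul_zero, zero_mul, add_zero]
  refine sum_congr rfl fun j _ => ?_
  rw [predChoose_succ_succ_eq_add, Nat.add_sub_add_right]
  push_cast
  ring

theorem pow_mul_pow_eq_pfPart_add_pfPart {u v z : R} (h : u * v = z * (v - u)) :
    ∀ {r s : ℕ}, 0 < r + s → u ^ r * v ^ s = pfPart u z r s + pfPart v (-z) s r := by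
  intro r
  induction r with
  | zero =>
    intro s hs
    rw [pfPart_zero_left, pfPart_zero_right _ _ (by omega)]
    ring
  | succ r ihr =>
    intro s _
    induction s with
    | zero =>
      rw [pfPart_zero_right _ _ (by omega), pfPart_zero_left]
      ring
    | succ s ihs =>
      have hrec : u ^ (r + 1) * v ^ (s + 1) =
          z * (u ^ r * v ^ (s + 1)) - z * (u ^ (r + 1) * v ^ s) := by
        linear_combination u ^ r * v ^ s * h
      rw [hrec, ihr (by omega), ihs (by omega), pfPart_succ_succ, pfPart_succ_succ]
      ring

theorem Ring.inverse_neg {R : Type*} [Ring R] (x : R) : (-x)⁻¹ʳ = -x⁻¹ʳ := by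
  by_cases hx : IsUnit x
  · obtain ⟨U, rfl⟩ := hx
    rw [← Units.val_neg, Ring.inverse_unit, Ring.inverse_unit, inv_neg, Units.val_neg]
  · rw [Ring.inverse_non_unit _ hx, Ring.inverse_non_unit _ (by rwa [IsUnit.neg_iff]), neg_zero]

theorem Ring.inverse_mul_inverse_eq {x y : R} (hx : IsUnit x) (hy : IsUnit y)
    (hxy : IsUnit (x - y)) : x⁻¹ʳ * y⁻¹ʳ = (x - y)⁻¹ʳ * (y⁻¹ʳ - x⁻¹ʳ) := by
  rw [Ring.inverse_sub_inverse (iff_of_true hy hx)]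
  linear_combination (-(x⁻¹ʳ * y⁻¹ʳ)) * Ring.inverse_mul_cancel _ hxy

theorem Ring.inverse_pow_mul_inverse_pow {x y : R} (hx : IsUnit x) (hy : IsUnit y)
    (hxy : IsUnit (x - y)) {r s : ℕ} (hrs : 0 < r + s) :
    x⁻¹ʳ ^ r * y⁻¹ʳ ^ s = pfPart x⁻¹ʳ (x - y)⁻¹ʳ r s + pfPart y⁻¹ʳ (y - x)⁻¹ʳ s r := by
  rw [← neg_sub x y, Ring.inverse_neg]
  exact pow_mul_pow_eq_pfPart_add_pfPart (Ring.inverse_mul_inverse_eq hx hy hxy) hrs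

end PartialFraction

theorem Ring.inverse_algebraMap_units {K R : Type*} [Field K] [CommRing R] [Algebra K R]
    (ε : Kˣ) : (algebraMap K R ε)⁻¹ʳ = algebraMap K R (ε⁻¹ : Kˣ) :=
  Ring.inverse_unit (Units.map (algebraMap K R : K →* R) ε)

theorem sum_units_inverse_algebraMap_pow (Fq R : Type*) [Field Fq] [Fintype Fq] [DecidableEq Fq]
    [CommRing R] [Algebra Fq R] (j : ℕ) :
    ∑ ε : Fqˣ, (algebraMap Fq R ε)⁻¹ʳ ^ j = if Fintype.card Fq - 1 ∣ j then -1 else 0 := by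
  have hinv : ∑ ε : Fqˣ, ((ε⁻¹ : Fqˣ) : Fq) ^ j = ∑ ε : Fqˣ, (ε : Fq) ^ j :=
    Fintype.sum_equiv (Equiv.inv Fqˣ) _ _ fun _ => rfl
  simp_rw [Ring.inverse_algebraMap_units, ← map_pow, ← map_sum, hinv, FiniteField.sum_pow_units]
  split_ifs <;> simp

theorem Finset.sum_sum_erase_comm {ι M : Type*} [DecidableEq ι] [AddCommGroup M] (s : Finset ι)
    (g : ι → ι → M) : ∑ a ∈ s, ∑ b ∈ s.erase a, g a b = ∑ a ∈ s, ∑ b ∈ s.erase a, g b a := by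
  have key (h : ι → ι → M) :
      ∑ a ∈ s, ∑ b ∈ s.erase a, h a b = ∑ a ∈ s, ∑ b ∈ s, h a b - ∑ a ∈ s, h a a := by
    rw [← sum_sub_distrib]
    exact sum_congr rfl fun a ha => sum_erase_eq_sub ha
  rw [key, key, sum_comm]

section MonicPolynomials

variable (Fq : Type*) [Field Fq]

theorem finite_setOf_monic_natDegree_eq [Finite Fq] (d : ℕ) :
    {p : Fq[X] | p.Monic ∧ p.natDegree = d}.Finite := by
  have : Finite (degreeLT Fq d) := .of_equiv _ (degreeLTEquiv Fq d).toEquiv.symm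
  exact Set.finite_coe_iff.mp (.of_equiv _ (monicEquivDegreeLT d).symm)

theorem finite_setOf_monic_natDegree_lt [Finite Fq] (d : ℕ) :
    {p : Fq[X] | p.Monic ∧ p.natDegree < d}.Finite :=
  ((Set.finite_Iio d).biUnion fun e _ => finite_setOf_monic_natDegree_eq Fq e).subset
    fun _ hp => Set.mem_biUnion hp.2 ⟨hp.1, rfl⟩

noncomputable def monicOfDegree [Finite Fq] (d : ℕ) : Finset Fq[X] :=
  (finite_setOf_monic_natDegree_eq Fq d).toFinset

noncomputable def monicOfDegreeLT [Finite Fq] (d : ℕ) : Finset Fq[X] :=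
  (finite_setOf_monic_natDegree_lt Fq d).toFinset

variable {Fq} [Fintype Fq] {d : ℕ} {a b f : Fq[X]}

@[simp] theorem mem_monicOfDegree : a ∈ monicOfDegree Fq d ↔ a.Monic ∧ a.natDegree = d :=
  Set.Finite.mem_toFinset _

@[simp] theorem mem_monicOfDegreeLT : a ∈ monicOfDegreeLT Fq d ↔ a.Monic ∧ a.natDegree < d :=
  Set.Finite.mem_toFinset _

theorem coe_monicOfDegree :
    (monicOfDegree Fq d : Set Fq[X]) = {a | a.Monic ∧ a.natDegree = d} :=
  Set.Finite.coe_toFinset _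

theorem coe_monicOfDegreeLT :
    (monicOfDegreeLT Fq d : Set Fq[X]) = {a | a.Monic ∧ a.natDegree < d} :=
  Set.Finite.coe_toFinset _

theorem card_monicOfDegree : #(monicOfDegree Fq d) = Fintype.card Fq ^ d := by
  rw [monicOfDegree, ← Set.ncard_eq_toFinset_card _ (finite_setOf_monic_natDegree_eq Fq d),
    ← Nat.card_coe_set_eq]
  exact (Nat.card_congr ((monicEquivDegreeLT d).trans (degreeLTEquiv Fq d).toEquiv)).trans
    (by simp)

theorem sub_C_mul_mem_monicOfDegree (ha : a ∈ monicOfDegree Fq d) (hf : f.natDegree < d)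
    (ε : Fq) : a - C ε * f ∈ monicOfDegree Fq d := by
  rw [mem_monicOfDegree] at ha ⊢
  have hlt : (C ε * f).natDegree < a.natDegree := (natDegree_C_mul_le ε f).trans_lt (ha.2 ▸ hf)
  exact ⟨ha.1.sub_of_left (degree_lt_degree hlt),
    (natDegree_sub_eq_left_of_natDegree_lt hlt).trans ha.2⟩

theorem exists_sub_C_mul_eq (ha : a ∈ monicOfDegree Fq d) (hb : b ∈ monicOfDegree Fq d)
    (hab : b ≠ a) : ∃ ε : Fqˣ, ∃ f ∈ monicOfDegreeLT Fq d, a - C (ε : Fq) * f = b := by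
  rw [mem_monicOfDegree] at ha hb
  have hg : a - b ≠ 0 := sub_ne_zero.mpr hab.symm
  have hlc : (a - b).leadingCoeff ≠ 0 := leadingCoeff_ne_zero.mpr hg
  have hdeg : (a - b).natDegree < d := by
    rw [← ha.2, natDegree_lt_iff_degree_lt hg, ← degree_eq_natDegree ha.1.ne_zero]
    refine degree_sub_lt_left ?_ ha.1.ne_zero (ha.1.leadingCoeff.trans hb.1.leadingCoeff.symm)
    rw [degree_eq_natDegree ha.1.ne_zero, degree_eq_natDegree hb.1.ne_zero, ha.2, hb.2]
  refine ⟨Units.mk0 _ hlc, (a - b) * C (a - b).leadingCoeff⁻¹, ?_, ?_⟩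
  · rw [mem_monicOfDegreeLT, natDegree_mul_C (inv_ne_zero hlc)]
    exact ⟨monic_mul_leadingCoeff_inv hg, hdeg⟩
  · rw [Units.val_mk0, mul_left_comm, ← C_mul, mul_inv_cancel₀ hlc, C_1, mul_one, sub_sub_cancel]

theorem sum_erase_monicOfDegree [DecidableEq Fq] {M : Type*} [AddCommMonoid M]
    (ha : a ∈ monicOfDegree Fq d) (g : Fq[X] → M) :
    ∑ b ∈ (monicOfDegree Fq d).erase a, g b =
      ∑ ε : Fqˣ, ∑ f ∈ monicOfDegreeLT Fq d, g (a - C (ε : Fq) * f) := by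
  rw [← sum_product']
  symm
  refine sum_nbij (fun p => a - C (p.1 : Fq) * p.2) ?_ ?_ ?_ fun _ _ => rfl
  · rintro ⟨ε, f⟩ hp
    have hf := mem_monicOfDegreeLT.mp (mem_product.mp hp).2
    refine mem_erase.mpr ⟨?_, sub_C_mul_mem_monicOfDegree ha hf.2 ε⟩
    rw [Ne, sub_eq_self]
    exact mul_ne_zero (C_ne_zero.mpr ε.ne_zero) hf.1.ne_zero
  · rintro ⟨ε, f⟩ hp ⟨ε', f'⟩ hp' h
    have hf := (mem_monicOfDegreeLT.mp (mem_product.mp hp).2).1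
    have hf' := (mem_monicOfDegreeLT.mp (mem_product.mp hp').2).1
    have h' : C (ε : Fq) * f = C (ε' : Fq) * f' := sub_right_injective h
    obtain rfl : ε = ε' := by
      simpa [hf.leadingCoeff, hf'.leadingCoeff, Units.val_inj] using congrArg leadingCoeff h'
    simp [mul_right_injective₀ (C_ne_zero.mpr ε.ne_zero) h']
  · intro b hb
    obtain ⟨hba, hb⟩ := mem_erase.mp hb
    obtain ⟨ε, f, hf, rfl⟩ := exists_sub_C_mul_eq ha hb hba
    exact ⟨(ε, f), by simp [hf], rfl⟩

end MonicPolynomials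

/-- The coefficient `Δ^{r+s-j, j}_{r,s}` of the paper, `q` being the size of the field. -/
def shuffleCoeff (q r s j : ℕ) : ℤ :=
  if (q - 1) ∣ j ∧ 0 < j then
    (-1 : ℤ) ^ (r - 1) * Nat.choose (j - 1) (r - 1) +
      (-1 : ℤ) ^ (s - 1) * Nat.choose (j - 1) (s - 1)
  else 0

theorem shuffleCoeff_eq {R : Type*} [CommRing R] (q : ℕ) {r s : ℕ} (hr : 0 < r) (hs : 0 < s)
    (j : ℕ) : (shuffleCoeff q r s j : R) =
      ((-1) ^ s * predChoose j s + (-1) ^ r * predChoose j r) *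
        if q - 1 ∣ j then -1 else 0 := by
  obtain ⟨r, rfl⟩ := Nat.exists_eq_add_one_of_ne_zero hr.ne'
  obtain ⟨s, rfl⟩ := Nat.exists_eq_add_one_of_ne_zero hs.ne'
  rcases j with _ | j
  · simp [shuffleCoeff]
  · simp only [shuffleCoeff, Nat.succ_pos, and_true, predChoose_succ_succ, Nat.add_sub_cancel]
    split_ifs <;> push_cast <;> ring

section Bracket

variable {Fq R : Type*} [Field Fq] [CommRing R] [Algebra Fq R]

structure IsBracket (d : ℕ) (br : Fq[X] → R) : Prop where
  isUnit : ∀ a : Fq[X], a.Monic → a.natDegree ≤ d → IsUnit (br a)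
  map_add : ∀ a b : Fq[X], a.natDegree ≤ d → b.natDegree ≤ d → br (a + b) = br a + br b
  map_C_mul : ∀ (ε : Fq) (a : Fq[X]), a.natDegree ≤ d → br (C ε * a) = algebraMap Fq R ε * br a

theorem sum_monicOfDegree_sum_monicOfDegreeLT_eq_zero [Fintype Fq] (d : ℕ) (g : Fq[X] → R) :
    ∑ _a ∈ monicOfDegree Fq d, ∑ f ∈ monicOfDegreeLT Fq d, g f = 0 := by
  rw [sum_const, card_monicOfDegree, nsmul_eq_mul]
  rcases d with _ | d
  · rw [sum_eq_zero fun f hf => absurd (mem_monicOfDegreeLT.mp hf).2 (Nat.not_lt_zero _),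
      mul_zero]
  · have hq : (Fintype.card Fq : R) = 0 := by
      rw [← map_natCast (algebraMap Fq R), FiniteField.cast_card_eq_zero, map_zero]
    rw [Nat.cast_pow, hq, zero_pow (Nat.succ_ne_zero d), zero_mul]

namespace IsBracket

variable {d : ℕ} {br : Fq[X] → R} {a b f : Fq[X]}

theorem map_sub_C_mul (hbr : IsBracket d br) (ha : a.natDegree ≤ d) (hf : f.natDegree ≤ d)
    (ε : Fq) : br (a - C ε * f) = br a - algebraMap Fq R ε * br f := by
  have hεf : (C ε * f).natDegree ≤ d := (natDegree_C_mul_le ε f).trans hf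
  have h := hbr.map_add (a - C ε * f) (C ε * f)
    ((natDegree_sub_le _ _).trans (max_le ha hεf)) hεf
  rw [sub_add_cancel, hbr.map_C_mul ε f hf] at h
  exact eq_sub_of_add_eq h.symm

variable [Fintype Fq]

theorem isUnit_of_mem_monicOfDegree (hbr : IsBracket d br) (ha : a ∈ monicOfDegree Fq d) :
    IsUnit (br a) :=
  hbr.isUnit a (mem_monicOfDegree.mp ha).1 (mem_monicOfDegree.mp ha).2.le

theorem isUnit_of_mem_monicOfDegreeLT (hbr : IsBracket d br) (hf : f ∈ monicOfDegreeLT Fq d) :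
    IsUnit (br f) :=
  hbr.isUnit f (mem_monicOfDegreeLT.mp hf).1 (mem_monicOfDegreeLT.mp hf).2.le

theorem sub_map_sub_C_mul (hbr : IsBracket d br) (ha : a ∈ monicOfDegree Fq d)
    (hf : f ∈ monicOfDegreeLT Fq d) (ε : Fq) :
    br a - br (a - C ε * f) = algebraMap Fq R ε * br f := by
  rw [hbr.map_sub_C_mul (mem_monicOfDegree.mp ha).2.le (mem_monicOfDegreeLT.mp hf).2.le,
    sub_sub_cancel]

theorem isUnit_sub (hbr : IsBracket d br) (ha : a ∈ monicOfDegree Fq d)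
    (hb : b ∈ monicOfDegree Fq d) (hab : b ≠ a) : IsUnit (br a - br b) := by
  obtain ⟨ε, f, hf, rfl⟩ := exists_sub_C_mul_eq ha hb hab
  rw [hbr.sub_map_sub_C_mul ha hf]
  exact (ε.isUnit.map _).mul (hbr.isUnit_of_mem_monicOfDegreeLT hf)

theorem sum_sum_erase_mul_inverse_sub_pow [DecidableEq Fq] (hbr : IsBracket d br)
    (g : Fq[X] → R) (j : ℕ) :
    ∑ a ∈ monicOfDegree Fq d, ∑ b ∈ (monicOfDegree Fq d).erase a, g a * (br a - br b)⁻¹ʳ ^ j =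
      (if Fintype.card Fq - 1 ∣ j then -1 else 0) *
        ∑ a ∈ monicOfDegree Fq d, ∑ f ∈ monicOfDegreeLT Fq d, g a * (br f)⁻¹ʳ ^ j := by
  rw [mul_sum]
  refine sum_congr rfl fun a ha => ?_
  rw [sum_erase_monicOfDegree ha, ← sum_units_inverse_algebraMap_pow Fq R j, sum_mul]
  refine sum_congr rfl fun ε _ => ?_
  rw [mul_sum]
  refine sum_congr rfl fun f hf => ?_
  rw [hbr.sub_map_sub_C_mul ha hf, Ring.inverse_mul (.inl (ε.isUnit.map _)), mul_pow]
  ring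

theorem sum_sum_erase_pfPart [DecidableEq Fq] (hbr : IsBracket d br) (r s : ℕ) :
    ∑ a ∈ monicOfDegree Fq d, ∑ b ∈ (monicOfDegree Fq d).erase a,
        pfPart (br a)⁻¹ʳ (br a - br b)⁻¹ʳ r s =
      ∑ j ∈ range (r + s), (-1) ^ s * (predChoose j s : R) *
        (if Fintype.card Fq - 1 ∣ j then -1 else 0) *
          ∑ a ∈ monicOfDegree Fq d, ∑ f ∈ monicOfDegreeLT Fq d,
            (br a)⁻¹ʳ ^ (r + s - j) * (br f)⁻¹ʳ ^ j := by
  simp only [pfPart]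
  rw [sum_congr rfl fun a _ => sum_comm, sum_comm]
  refine sum_congr rfl fun j _ => ?_
  rw [mul_assoc, ← hbr.sum_sum_erase_mul_inverse_sub_pow, mul_sum]
  refine sum_congr rfl fun a _ => ?_
  rw [mul_sum]
  refine sum_congr rfl fun b _ => ?_
  ring

theorem sum_inverse_pow_mul_sum_inverse_pow (hbr : IsBracket d br) {r s : ℕ} (hr : 0 < r)
    (hs : 0 < s) :
    (∑ a ∈ monicOfDegree Fq d, (br a)⁻¹ʳ ^ r) * (∑ b ∈ monicOfDegree Fq d, (br b)⁻¹ʳ ^ s) =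
      ∑ a ∈ monicOfDegree Fq d, (br a)⁻¹ʳ ^ (r + s) +
        ∑ j ∈ range (r + s + 1), (shuffleCoeff (Fintype.card Fq) r s j : R) *
          ∑ a ∈ monicOfDegree Fq d, ∑ f ∈ monicOfDegreeLT Fq d,
            (br a)⁻¹ʳ ^ (r + s - j) * (br f)⁻¹ʳ ^ j := by
  classical
  set T := monicOfDegree Fq d
  set D : ℕ → R := fun j => ∑ a ∈ T, ∑ f ∈ monicOfDegreeLT Fq d,
    (br a)⁻¹ʳ ^ (r + s - j) * (br f)⁻¹ʳ ^ j
  have hD : D (r + s) = 0 := by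
    simp only [D, Nat.sub_self, pow_zero, one_mul]
    exact sum_monicOfDegree_sum_monicOfDegreeLT_eq_zero d _
  calc _ = ∑ a ∈ T, (br a)⁻¹ʳ ^ (r + s) +
        ∑ a ∈ T, ∑ b ∈ T.erase a, (br a)⁻¹ʳ ^ r * (br b)⁻¹ʳ ^ s := by
        rw [sum_mul_sum, ← sum_add_distrib]
        exact sum_congr rfl fun a ha => by rw [← add_sum_erase _ _ ha, pow_add]
    _ = ∑ a ∈ T, (br a)⁻¹ʳ ^ (r + s) +
        (∑ a ∈ T, ∑ b ∈ T.erase a, pfPart (br a)⁻¹ʳ (br a - br b)⁻¹ʳ r s +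
          ∑ a ∈ T, ∑ b ∈ T.erase a, pfPart (br a)⁻¹ʳ (br a - br b)⁻¹ʳ s r) := by
        congr 1
        rw [sum_sum_erase_comm T (fun a b => pfPart (br a)⁻¹ʳ (br a - br b)⁻¹ʳ s r),
          ← sum_add_distrib]
        refine sum_congr rfl fun a ha => (sum_congr rfl fun b hb => ?_).trans sum_add_distrib
        exact Ring.inverse_pow_mul_inverse_pow (hbr.isUnit_of_mem_monicOfDegree ha)
          (hbr.isUnit_of_mem_monicOfDegree (mem_of_mem_erase hb))
          (hbr.isUnit_sub ha (mem_of_mem_erase hb) (ne_of_mem_erase hb)) (by omega)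
    _ = ∑ a ∈ T, (br a)⁻¹ʳ ^ (r + s) +
        ∑ j ∈ range (r + s), (shuffleCoeff (Fintype.card Fq) r s j : R) * D j := by
        rw [hbr.sum_sum_erase_pfPart, hbr.sum_sum_erase_pfPart, add_comm s r, ← sum_add_distrib]
        simp only [shuffleCoeff_eq _ hr hs]
        congr 1
        exact sum_congr rfl fun j _ => by ring
    _ = ∑ a ∈ T, (br a)⁻¹ʳ ^ (r + s) +
        ∑ j ∈ range (r + s + 1), (shuffleCoeff (Fintype.card Fq) r s j : R) * D j := by
        rw [sum_range_succ _ (r + s), hD, mul_zero, add_zero]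

end IsBracket

end Bracket

theorem stmt18_general (Fq : Type*) [Field Fq] [Fintype Fq] {𝕂 : Type*} [CommRing 𝕂]
    [Algebra Fq 𝕂] (d₀ : ℕ) (br : Polynomial Fq → 𝕂)
    (hu : ∀ a : Polynomial Fq, a.Monic → a.natDegree < d₀ → IsUnit (br a))
    (hadd : ∀ a b : Polynomial Fq, a.natDegree < d₀ → b.natDegree < d₀ →
      br (a + b) = br a + br b)
    (hsmul : ∀ (ε : Fq) (a : Polynomial Fq), a.natDegree < d₀ →
      br (Polynomial.C ε * a) = algebraMap Fq 𝕂 ε * br a)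
    (r₁ s₁ : ℕ) (hr₁ : 0 < r₁) (hs₁ : 0 < s₁) (d : ℕ) (hd : d < d₀) :
    (∑ᶠ a ∈ {a : Polynomial Fq | a.Monic ∧ a.natDegree = d}, Ring.inverse (br a) ^ r₁) *
        (∑ᶠ b ∈ {b : Polynomial Fq | b.Monic ∧ b.natDegree = d}, Ring.inverse (br b) ^ s₁) =
      (∑ᶠ a ∈ {a : Polynomial Fq | a.Monic ∧ a.natDegree = d},
          Ring.inverse (br a) ^ (r₁ + s₁)) +
        ∑ j ∈ Finset.range (r₁ + s₁ + 1),
          (((if (Fintype.card Fq - 1) ∣ j ∧ 0 < j then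
                (-1 : ℤ) ^ (r₁ - 1) * Nat.choose (j - 1) (r₁ - 1) +
                  (-1 : ℤ) ^ (s₁ - 1) * Nat.choose (j - 1) (s₁ - 1)
              else 0) : ℤ) : 𝕂) *
            ∑ᶠ a ∈ {a : Polynomial Fq | a.Monic ∧ a.natDegree = d},
              ∑ᶠ f ∈ {f : Polynomial Fq | f.Monic ∧ f.natDegree < d},
                Ring.inverse (br a) ^ (r₁ + s₁ - j) * Ring.inverse (br f) ^ j := by
  have hbr : IsBracket d br :=
    ⟨fun a ha hda => hu a ha (by omega), fun a b ha hb => hadd a b (by omega) (by omega),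
      fun ε a ha => hsmul ε a (by omega)⟩
  rw [← coe_monicOfDegree, ← coe_monicOfDegreeLT]
  simp only [finsum_mem_coe_finset]
  exact hbr.sum_inverse_pow_mul_sum_inverse_pow hr₁ hs₁

/-- Abstract `r`-shuffle base relation: let `𝕂` be an integral domain containing `𝔽_r`, with
a bracket `br` assigning to each polynomial of degree `< d₀` an element of `𝕂` such that
monic ones are units, `[a+b] = [a] + [b]`, and `[εa] = ε[a]`. Then for positive `r₁, s₁`
and `d < d₀`,
`H_d(r₁)·H_d(s₁) = H_d(r₁+s₁) + Σ_{i+j=r₁+s₁} Δ^{i,j}_{r₁,s₁} H_d(i,j)`, where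
`Δ^{i,j}_{r₁,s₁} = (−1)^{r₁−1}C(j−1,r₁−1) + (−1)^{s₁−1}C(j−1,s₁−1)` if `(r−1) ∣ j`, `j > 0`,
and `0` otherwise. -/
theorem stmt18 (Fq : Type*) [Field Fq] [Fintype Fq] {𝕂 : Type*} [CommRing 𝕂] [IsDomain 𝕂]
    [Algebra Fq 𝕂] (d₀ : ℕ) (br : Polynomial Fq → 𝕂)
    (hu : ∀ a : Polynomial Fq, a.Monic → a.natDegree < d₀ → IsUnit (br a))
    (hadd : ∀ a b : Polynomial Fq, a.natDegree < d₀ → b.natDegree < d₀ →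
      br (a + b) = br a + br b)
    (hsmul : ∀ (ε : Fq) (a : Polynomial Fq), a.natDegree < d₀ →
      br (Polynomial.C ε * a) = algebraMap Fq 𝕂 ε * br a)
    (r₁ s₁ : ℕ) (hr₁ : 0 < r₁) (hs₁ : 0 < s₁) (d : ℕ) (hd : d < d₀) :
    (∑ᶠ a ∈ {a : Polynomial Fq | a.Monic ∧ a.natDegree = d}, Ring.inverse (br a) ^ r₁) *
        (∑ᶠ b ∈ {b : Polynomial Fq | b.Monic ∧ b.natDegree = d}, Ring.inverse (br b) ^ s₁) =
      (∑ᶠ a ∈ {a : Polynomial Fq | a.Monic ∧ a.natDegree = d},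
          Ring.inverse (br a) ^ (r₁ + s₁)) +
        ∑ j ∈ Finset.range (r₁ + s₁ + 1),
          (((if (Fintype.card Fq - 1) ∣ j ∧ 0 < j then
                (-1 : ℤ) ^ (r₁ - 1) * Nat.choose (j - 1) (r₁ - 1) +
                  (-1 : ℤ) ^ (s₁ - 1) * Nat.choose (j - 1) (s₁ - 1)
              else 0) : ℤ) : 𝕂) *
            ∑ᶠ a ∈ {a : Polynomial Fq | a.Monic ∧ a.natDegree = d},
              ∑ᶠ f ∈ {f : Polynomial Fq | f.Monic ∧ f.natDegree < d},
                Ring.inverse (br a) ^ (r₁ + s₁ - j) * Ring.inverse (br f) ^ j :=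
  stmt18_general Fq d₀ br hu hadd hsmul r₁ s₁ hr₁ hs₁ d hd
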